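/- Let p be a prime, F a field of characteristic p, g a Lie algebra over F, t an integer with 1 ≤ t ≤ p, elements a₁, ..., a_t ∈ g, and positive integers r₁, ..., r_t with r₁ + ⋯ + r_t = p. Let T(r₁,...,r_t) be the set of maps τ: {1,...,p} → {1,...,t} taking each value i exactly r_i times. Then in U(g): r₁ · Σ_{τ ∈ T} a_{τ(1)} a_{τ(2)} ⋯ a_{τ(p)} = Σ_{τ ∈ T, τ(1)=1} [[⋯[[a_{τ(1)}, a_{τ(2)}], a_{τ(3)}], ⋯], a_{τ(p)}]. -/

import Mathlib

/-!
Expanding `[[x₀, x₁], …, x_n]` in an associative ring gives `∑ (-1)^|s| x_s↓ x₀ x_{sᶜ}↑` over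
subsets `s ⊆ {1, …, n}`, where `x_s↓` is the product over `s` in decreasing order and `x_{sᶜ}↑`
the product over the complement in increasing order; each term is the word `x₀ x₁ ⋯ x_n` with its
positions permuted so that `x₀` lands in position `|s|`. Summing over the maps `τ ∈ T` with
`τ(0) = 1` and reindexing by that permutation, the term of `s` becomes
`S_k = ∑_{τ ∈ T, τ(k) = 1} a_τ` with `k = |s|`, so the right-hand side is
`∑_k (-1)^k C(p-1, k) S_k`. Since `C(p-1, k) ≡ (-1)^k mod p`, this is `∑_k S_k`, which counts
every `τ ∈ T` once for each of its `r₁` positions with value `1`.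
-/

open UniversalEnvelopingAlgebra

attribute [local instance 100] LieRing.ofAssociativeRing

/-- The left-nested iterated Lie bracket `[[⋯[[x₁,x₂],x₃],⋯],x_r]` of a list
`[x₁, …, x_r]` (and `0` for the empty list). -/
def nestedBracket {L : Type*} [LieRing L] : List L → L
  | [] => 0
  | x :: xs => xs.foldl (fun u v => ⁅u, v⁆) x

open Finset Fin.NatCast

theorem Fintype.sum_fun_fin_succ {β M : Type*} [Fintype β] [AddCommMonoid M] {n : ℕ}
    (F : (Fin (n + 1) → β) → M) :
    ∑ s, F s = ∑ s₀ : β, ∑ s : Fin n → β, F (Fin.cons s₀ s) :=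
  ((Fin.consEquiv fun _ => β).sum_comp F).symm.trans (Fintype.sum_prod_type _)

theorem card_filter_comp_equiv {α β : Type*} [Fintype α] [DecidableEq β] (e : α ≃ α)
    (τ : α → β) (i : β) : #{j | τ (e j) = i} = #{j | τ j = i} :=
  card_equiv e (by simp)

theorem sum_filter_comp_equiv {α β M : Type*} [Fintype α] [DecidableEq α] [Fintype β]
    [DecidableEq β] [AddCommMonoid M] (e : α ≃ α) (P : (α → β) → Prop) [DecidablePred P]
    (hP : ∀ τ, P (τ ∘ e) ↔ P τ) {k k' : α} (hk : e k = k') (z : β) (w : (α → β) → M) :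
    ∑ τ with P τ ∧ τ k' = z, w (τ ∘ e) = ∑ τ with P τ ∧ τ k = z, w τ :=
  sum_nbij' (· ∘ e) (· ∘ e.symm) (by simp [hP, hk])
    (by simp [← hP (_ ∘ e.symm), Function.comp_assoc, ← hk])
    (fun τ _ => by simp [Function.comp_assoc]) (fun τ _ => by simp [Function.comp_assoc])
    (fun _ _ => rfl)

theorem smul_sum_eq_sum_sum_filter_apply_eq {α β M : Type*} [Fintype α] [DecidableEq β]
    [AddCommMonoid M] (T : Finset (α → β)) (z : β) (m : ℕ)
    (hT : ∀ τ ∈ T, #{j | τ j = z} = m) (w : (α → β) → M) :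
    m • ∑ τ ∈ T, w τ = ∑ j, ∑ τ ∈ T with τ j = z, w τ := by
  calc m • ∑ τ ∈ T, w τ = ∑ τ ∈ T, ∑ j, if τ j = z then w τ else 0 := by
        rw [smul_sum]
        refine sum_congr rfl fun τ hτ => ?_
        rw [← sum_filter, sum_const, hT τ hτ]
    _ = ∑ j, ∑ τ ∈ T with τ j = z, w τ := by
        simp only [sum_filter]
        exact sum_comm

theorem sum_boolFun_apply_card {M : Type*} [AddCommMonoid M] (n : ℕ) (f : ℕ → M) :
    ∑ s : Fin n → Bool, f #{i | s i} = ∑ m ∈ range (n + 1), n.choose m • f m := by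
  calc ∑ s : Fin n → Bool, f #{i | s i} = ∑ t : Finset (Fin n), f #t :=
        sum_nbij' (fun s => ({i | s i} : Finset (Fin n))) (fun t i => i ∈ t) (by simp) (by simp)
          (fun s _ => by ext; simp) (fun t _ => by ext; simp) (fun _ _ => rfl)
    _ = ∑ m ∈ range (n + 1), n.choose m • f m := by
        rw [← powerset_univ, sum_powerset_apply_card, card_univ, Fintype.card_fin]

theorem Nat.Prime.cast_choose_pred_eq_neg_one_pow {R : Type*} [Ring R] {p : ℕ} (hp : p.Prime)
    (hR : (p : R) = 0) {k : ℕ} (hk : k < p) : ((p - 1).choose k : R) = (-1) ^ k := by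
  induction k with
  | zero => simp
  | succ k ih =>
    have hpascal : (p - 1).choose k + (p - 1).choose (k + 1) = p.choose (k + 1) := by
      rw [← Nat.choose_succ_succ', Nat.sub_add_cancel hp.one_lt.le]
    obtain ⟨m, hm⟩ := hp.dvd_choose_self k.succ_ne_zero hk
    have hsum : ((p - 1).choose k : R) + (p - 1).choose (k + 1) = 0 := by
      rw [← Nat.cast_add, hpascal, hm, Nat.cast_mul, hR, zero_mul]
    rw [ih (by omega)] at hsum
    rw [pow_succ, mul_neg_one]
    exact eq_neg_of_add_eq_zero_right hsum

theorem sum_range_choose_pred_smul_neg_one_pow_mul {R : Type*} [Ring R] {p : ℕ} (hp : p.Prime)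
    (hR : (p : R) = 0) (f : ℕ → R) :
    ∑ m ∈ range p, (p - 1).choose m • ((-1) ^ m * f m) = ∑ m ∈ range p, f m := by
  refine sum_congr rfl fun m hm => ?_
  rw [nsmul_eq_mul, ← mul_assoc, hp.cast_choose_pred_eq_neg_one_pow hR (mem_range.1 hm),
    ← pow_add, Even.neg_one_pow ⟨m, rfl⟩, one_mul]

theorem List.filter_finRange_succ {n : ℕ} (q : Fin (n + 1) → Bool) :
    (List.finRange (n + 1)).filter q =
      (if q 0 then [0] else []) ++ ((List.finRange n).filter (q ∘ Fin.succ)).map Fin.succ := by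
  rw [List.finRange_succ, List.filter_cons, List.filter_map]
  split <;> simp_all

theorem card_filter_cons_eq_true {n : ℕ} (s₀ : Bool) (s : Fin n → Bool) :
    #{i | (Fin.cons s₀ s : Fin (n + 1) → Bool) i} = #{i | s i} + if s₀ then 1 else 0 := by
  rw [Fin.card_filter_univ_succ']
  cases s₀ <;> simp [add_comm]

section Arrangement

variable {n : ℕ}

def arrangement (s : Fin n → Bool) : List (Fin (n + 1)) :=
  ((List.finRange n).filter s).reverse.map Fin.succ ++
    0 :: ((List.finRange n).filter (!s ·)).map Fin.succ

theorem arrangement_perm (s : Fin n → Bool) : (arrangement s).Perm (List.finRange (n + 1)) := by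
  refine List.perm_middle.trans ?_
  rw [List.finRange_succ, ← List.map_append]
  exact ((List.reverse_perm _).append_right _ |>.trans (List.filter_append_perm _ _)).map _ |>.cons _

theorem length_arrangement (s : Fin n → Bool) : (arrangement s).length = n + 1 := by
  rw [(arrangement_perm s).length_eq, List.length_finRange]

theorem getElem_arrangement_card (s : Fin n → Bool) (h : #{i | s i} < (arrangement s).length) :
    (arrangement s)[#{i | s i}] = 0 := by
  have hlen : (((List.finRange n).filter s).reverse.map Fin.succ).length = #{i | s i} := by
    simp [← List.toFinset_card_of_nodup ((List.nodup_finRange n).filter _), List.toFinset_filter]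
  exact List.getElem_of_append rfl hlen

noncomputable def arrangementEquiv (s : Fin n → Bool) : Fin (n + 1) ≃ Fin (n + 1) :=
  (finCongr (length_arrangement s).symm).trans <|
    ((arrangement_perm s).nodup_iff.2 (List.nodup_finRange _)).getEquivOfForallMemList _
      fun x => (arrangement_perm s).mem_iff.2 (List.mem_finRange x)

theorem arrangementEquiv_card (s : Fin n → Bool) : arrangementEquiv s #{i | s i} = 0 := by
  have hs : #{i | s i} < n + 1 := Nat.lt_succ_of_le (card_le_univ _ |>.trans_eq (Fintype.card_fin n))
  simp only [arrangementEquiv, Equiv.trans_apply, List.Nodup.getEquivOfForallMemList_apply]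
  simp [Fin.val_natCast, Nat.mod_eq_of_lt hs, getElem_arrangement_card]

theorem ofFn_comp_arrangementEquiv {β : Type*} (f : Fin (n + 1) → β) (s : Fin n → Bool) :
    List.ofFn (f ∘ arrangementEquiv s) = (arrangement s).map f := by
  rw [← List.ofFn_get (arrangement s), List.map_ofFn, List.ofFn_congr (length_arrangement s)]
  rfl

end Arrangement

section Expansion

variable {A : Type*} [Ring A] {n : ℕ}

def leftWord (b : Fin n → A) (s : Fin n → Bool) : A :=
  (((List.finRange n).filter s).reverse.map b).prod

def rightWord (b : Fin n → A) (s : Fin n → Bool) : A :=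
  (((List.finRange n).filter (!s ·)).map b).prod

theorem leftWord_cons (b : Fin (n + 1) → A) (s₀ : Bool) (s : Fin n → Bool) :
    leftWord b (Fin.cons s₀ s) = leftWord (fun i => b i.succ) s * if s₀ then b 0 else 1 := by
  cases s₀ <;> simp [leftWord, List.filter_finRange_succ, Function.comp_def]

theorem rightWord_cons (b : Fin (n + 1) → A) (s₀ : Bool) (s : Fin n → Bool) :
    rightWord b (Fin.cons s₀ s) = (if s₀ then 1 else b 0) * rightWord (fun i => b i.succ) s := by
  cases s₀ <;> simp [rightWord, List.filter_finRange_succ, Function.comp_def]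

theorem foldl_commutator_eq_sum (b : Fin n → A) (c : A) :
    (List.ofFn b).foldl (fun u v => u * v - v * u) c =
      ∑ s : Fin n → Bool, (-1) ^ #{i | s i} * (leftWord b s * c * rightWord b s) := by
  induction n generalizing c with
  | zero => simp [leftWord, rightWord]
  | succ n ih =>
    rw [List.ofFn_succ, List.foldl_cons, ih, Fintype.sum_fun_fin_succ, Fintype.sum_bool,
      ← sum_add_distrib]
    refine sum_congr rfl fun s _ => ?_
    simp only [leftWord_cons, rightWord_cons, card_filter_cons_eq_true, if_true,
      Bool.false_eq_true, if_false, add_zero, pow_succ, mul_one, one_mul]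
    noncomm_ring

theorem prod_map_arrangement (f : Fin (n + 1) → A) (s : Fin n → Bool) :
    ((arrangement s).map f).prod =
      leftWord (fun i => f i.succ) s * f 0 * rightWord (fun i => f i.succ) s := by
  simp [arrangement, leftWord, rightWord, Function.comp_def, mul_assoc]

theorem nestedBracket_ofFn_eq_sum (f : Fin (n + 1) → A) :
    nestedBracket (List.ofFn f) =
      ∑ s : Fin n → Bool, (-1) ^ #{i | s i} * (List.ofFn (f ∘ arrangementEquiv s)).prod := by
  rw [List.ofFn_succ, nestedBracket]
  simp only [Ring.lie_def]
  rw [foldl_commutator_eq_sum]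
  simp only [ofFn_comp_arrangementEquiv, prod_map_arrangement]

end Expansion

theorem LieHom.map_nestedBracket {R L₁ L₂ : Type*} [CommRing R] [LieRing L₁] [LieAlgebra R L₁]
    [LieRing L₂] [LieAlgebra R L₂] (f : L₁ →ₗ⁅R⁆ L₂) (l : List L₁) :
    f (nestedBracket l) = nestedBracket (l.map f) := by
  cases l with
  | nil => simp [nestedBracket]
  | cons x xs =>
    simp only [nestedBracket, List.map_cons]
    induction xs generalizing x with
    | nil => rfl
    | cons y ys ih => simp only [List.foldl_cons, List.map_cons, ← LieHom.map_lie, ih]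

theorem statement7_general (p : ℕ) (hp : p.Prime) (F : Type*) [Field F] [CharP F p]
    (g : Type*) [LieRing g] [LieAlgebra F g] (t : ℕ) (ht : 0 < t)
    (a : Fin t → g) (r : Fin t → ℕ) :
    r ⟨0, ht⟩ •
        ∑ τ ∈ Finset.univ.filter (fun τ : Fin p → Fin t =>
            ∀ i : Fin t, (Finset.univ.filter fun j : Fin p => τ j = i).card = r i),
          (List.ofFn fun j => (ι F : g →ₗ⁅F⁆ UniversalEnvelopingAlgebra F g)
            (a (τ j))).prod =
      ∑ τ ∈ Finset.univ.filter (fun τ : Fin p → Fin t =>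
          (∀ i : Fin t,
            (Finset.univ.filter fun j : Fin p => τ j = i).card = r i) ∧
          τ ⟨0, hp.pos⟩ = ⟨0, ht⟩),
        (ι F : g →ₗ⁅F⁆ UniversalEnvelopingAlgebra F g)
          (nestedBracket (List.ofFn fun j => a (τ j))) := by
  obtain ⟨n, rfl⟩ : ∃ n, p = n + 1 := ⟨p - 1, (Nat.succ_pred_eq_of_pos hp.pos).symm⟩
  set P := fun τ : Fin (n + 1) → Fin t => ∀ i, #{j | τ j = i} = r i
  set z : Fin t := ⟨0, ht⟩
  set w := fun τ : Fin (n + 1) → Fin t => (List.ofFn fun j => ι F (a (τ j))).prod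
  set S : ℕ → UniversalEnvelopingAlgebra F g := fun k => ∑ τ with P τ ∧ τ k = z, w τ
  have hP (e : Fin (n + 1) ≃ Fin (n + 1)) (τ) : P (τ ∘ e) ↔ P τ := by
    simp only [P, Function.comp_apply, card_filter_comp_equiv]
  have hp0 : ((n + 1 : ℕ) : UniversalEnvelopingAlgebra F g) = 0 := by
    rw [← map_natCast (algebraMap F _), CharP.cast_eq_zero, map_zero]
  calc r z • ∑ τ with P τ, w τ = ∑ k : Fin (n + 1), S k := by
        rw [smul_sum_eq_sum_sum_filter_apply_eq _ z _ fun τ hτ => by exact (mem_filter.1 hτ).2 z]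
        simp only [S, Fin.cast_val_eq_self, filter_filter]
    _ = ∑ m ∈ range (n + 1), n.choose m • ((-1) ^ m * S m) := by
        rw [Fin.sum_univ_eq_sum_range S, ← sum_range_choose_pred_smul_neg_one_pow_mul hp hp0]
        rfl
    _ = ∑ s : Fin n → Bool,
          (-1) ^ #{i | s i} * ∑ τ with P τ ∧ τ 0 = z, w (τ ∘ arrangementEquiv s) := by
        rw [← sum_boolFun_apply_card]
        refine sum_congr rfl fun s _ => ?_
        rw [sum_filter_comp_equiv _ _ (hP _) (arrangementEquiv_card s)]
    _ = _ := by
        simp only [mul_sum]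
        rw [sum_comm]
        refine sum_congr rfl fun τ _ => ?_
        rw [LieHom.map_nestedBracket, List.map_ofFn, nestedBracket_ofFn_eq_sum]
        rfl

/-- generalized Cohen–Meurman–Norton identity. Let `p` be a
prime, `F` a field of characteristic `p`, `g` a Lie algebra over `F`,
`1 ≤ t ≤ p`, `a₁, …, a_t ∈ g`, and positive integers `r₁, …, r_t` with
`r₁ + ⋯ + r_t = p`.  Let `T(r₁,…,r_t)` be the set of maps
`τ : {1,…,p} → {1,…,t}` taking each value `i` exactly `r_i` times.  Then in
`U(g)`:
`r₁ · Σ_{τ ∈ T} a_{τ(1)} ⋯ a_{τ(p)}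
  = Σ_{τ ∈ T, τ(1)=1} [[⋯[[a_{τ(1)}, a_{τ(2)}], a_{τ(3)}], ⋯], a_{τ(p)}]`. -/
theorem statement7 (p : ℕ) (hp : p.Prime) (F : Type*) [Field F] [CharP F p]
    (g : Type*) [LieRing g] [LieAlgebra F g] (t : ℕ) (ht : 0 < t) (htp : t ≤ p)
    (a : Fin t → g) (r : Fin t → ℕ) (hr : ∀ i, 0 < r i)
    (hsum : ∑ i, r i = p) :
    r ⟨0, ht⟩ •
        ∑ τ ∈ Finset.univ.filter (fun τ : Fin p → Fin t =>
            ∀ i : Fin t, (Finset.univ.filter fun j : Fin p => τ j = i).card = r i),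
          (List.ofFn fun j => (ι F : g →ₗ⁅F⁆ UniversalEnvelopingAlgebra F g)
            (a (τ j))).prod =
      ∑ τ ∈ Finset.univ.filter (fun τ : Fin p → Fin t =>
          (∀ i : Fin t,
            (Finset.univ.filter fun j : Fin p => τ j = i).card = r i) ∧
          τ ⟨0, hp.pos⟩ = ⟨0, ht⟩),
        (ι F : g →ₗ⁅F⁆ UniversalEnvelopingAlgebra F g)
          (nestedBracket (List.ofFn fun j => a (τ j))) :=
  statement7_general p hp F g t ht a r
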